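/- If N is a 2-primal submodule of M, then ⟨E_M(N)⟩/N ⊆ ⟨E_M(β(N))⟩/N = β(N)/N. In particular, for any 2-primal module M, ⟨E_M(0)⟩ ⊆ β(M). -/

import Mathlib

/-- A submodule `P` is completely prime if it is proper and `a • m ∈ P` implies
`m ∈ P` or `a • M ⊆ P`. -/
def IsCompletelyPrimeSubmodule {R : Type*} [Ring R] {M : Type*} [AddCommGroup M] [Module R M]
    (P : Submodule R M) : Prop :=
  P ≠ ⊤ ∧ ∀ (a : R) (m : M), a • m ∈ P → m ∈ P ∨ ∀ x : M, a • x ∈ P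

/-- A submodule `P` is prime if it is proper and for every two-sided ideal `A` of `R`
and submodule `N`, `A N ⊆ P` implies `N ⊆ P` or `A M ⊆ P`. -/
def IsPrimeSubmodule {R : Type*} [Ring R] {M : Type*} [AddCommGroup M] [Module R M]
    (P : Submodule R M) : Prop :=
  P ≠ ⊤ ∧ ∀ (A : TwoSidedIdeal R) (N : Submodule R M),
    (∀ a ∈ A, ∀ n ∈ N, a • n ∈ P) → N ≤ P ∨ ∀ a ∈ A, ∀ x : M, a • x ∈ P

/-- The prime radical `β(N)`: the intersection of all prime submodules containing `N`
(equal to `⊤ = M` if there are none). -/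
def primeRadical {R : Type*} [Ring R] {M : Type*} [AddCommGroup M] [Module R M]
    (N : Submodule R M) : Submodule R M :=
  sInf {P | IsPrimeSubmodule P ∧ N ≤ P}

/-- The completely prime radical `β_co(N)`: the intersection of all completely prime
submodules containing `N` (equal to `⊤ = M` if there are none). -/
def cpRadical {R : Type*} [Ring R] {M : Type*} [AddCommGroup M] [Module R M]
    (N : Submodule R M) : Submodule R M :=
  sInf {P | IsCompletelyPrimeSubmodule P ∧ N ≤ P}

/-- The envelope `E_M(N) = {r • m : r^k • m ∈ N for some positive integer k}`. -/
def envelope {R : Type*} [Ring R] {M : Type*} [AddCommGroup M] [Module R M]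
    (N : Submodule R M) : Set M :=
  {x | ∃ (r : R) (m : M) (k : ℕ), 0 < k ∧ r ^ k • m ∈ N ∧ x = r • m}

/-- A submodule `N` is completely semiprime if `a ^ 2 • m ∈ N` implies `a • m ∈ N`. -/
def IsCompletelySemiprimeSubmodule {R : Type*} [Ring R] {M : Type*} [AddCommGroup M]
    [Module R M] (N : Submodule R M) : Prop :=
  ∀ (a : R) (m : M), a ^ 2 • m ∈ N → a • m ∈ N


/-! A completely semiprime submodule `P` contains its envelope: `r ^ (k + 2) • m ∈ P` gives
`(r ^ (k + 1)) ^ 2 • m = r ^ k • r ^ (k + 2) • m ∈ P`, hence `r ^ (k + 1) • m ∈ P`, and descending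
on `k` gives `r • m ∈ P`. The completely prime radical is completely semiprime, so for 2-primal `N`
so is `β(M ⧸ N)`, and hence so is its preimage `β(N)` under the correspondence between prime
submodules of `M ⧸ N` and prime submodules of `M` containing `N`. Thus `⟨E_M(β(N))⟩ = β(N)`
already in `M`. -/

section

variable {R : Type*} [Ring R] {M M' : Type*} [AddCommGroup M] [Module R M]
  [AddCommGroup M'] [Module R M']

lemma le_primeRadical (N : Submodule R M) : N ≤ primeRadical N :=
  le_sInf fun _ hP => hP.2

lemma envelope_mono {N N' : Submodule R M} (h : N ≤ N') : envelope N ⊆ envelope N' := by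
  rintro x ⟨r, m, k, hk, hm, rfl⟩
  exact ⟨r, m, k, hk, h hm, rfl⟩

lemma subset_envelope (N : Submodule R M) : (N : Set M) ⊆ envelope N :=
  fun x hx => ⟨1, x, 1, one_pos, by simpa using hx, (one_smul R x).symm⟩

lemma IsCompletelySemiprimeSubmodule.comap {P : Submodule R M'}
    (hP : IsCompletelySemiprimeSubmodule P) (f : M →ₗ[R] M') :
    IsCompletelySemiprimeSubmodule (P.comap f) := by
  intro a m h
  simpa only [Submodule.mem_comap, map_smul] using hP a (f m) (by simpa using h)

lemma IsCompletelySemiprimeSubmodule.smul_mem_of_pow_smul_mem {P : Submodule R M}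
    (hP : IsCompletelySemiprimeSubmodule P) {r : R} {m : M} :
    ∀ k : ℕ, r ^ (k + 1) • m ∈ P → r • m ∈ P
  | 0, h => by simpa using h
  | k + 1, h => by
    refine hP.smul_mem_of_pow_smul_mem k (hP _ _ ?_)
    have hsq : (r ^ (k + 1)) ^ 2 • m = r ^ k • r ^ (k + 2) • m := by
      rw [← pow_mul, ← mul_smul, ← pow_add]
      ring_nf
    rw [hsq]
    exact P.smul_mem _ h

lemma IsCompletelySemiprimeSubmodule.envelope_subset {P : Submodule R M}
    (hP : IsCompletelySemiprimeSubmodule P) : envelope P ⊆ P := by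
  rintro _ ⟨r, m, _ | k, hk, hm, rfl⟩
  · exact (lt_irrefl 0 hk).elim
  · exact hP.smul_mem_of_pow_smul_mem k hm

lemma cpRadical_isCompletelySemiprime (N : Submodule R M) :
    IsCompletelySemiprimeSubmodule (cpRadical N) := by
  intro a m h
  simp only [cpRadical, Submodule.mem_sInf] at h ⊢
  intro P hP
  have haam : a • a • m ∈ P := by simpa only [pow_two, mul_smul] using h P hP
  exact (hP.1.2 a (a • m) haam).elim id fun haP => haP m

lemma IsPrimeSubmodule.comap_of_surjective {Q : Submodule R M'} (hQ : IsPrimeSubmodule Q)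
    {f : M →ₗ[R] M'} (hf : Function.Surjective f) : IsPrimeSubmodule (Q.comap f) := by
  refine ⟨fun htop => hQ.1 ?_, fun A N hAN => ?_⟩
  · rw [← Submodule.map_comap_eq_of_surjective hf Q, htop, Submodule.map_top,
      LinearMap.range_eq_top.2 hf]
  · have hAfN : ∀ a ∈ A, ∀ n ∈ N.map f, a • n ∈ Q := by
      rintro a ha _ ⟨n, hn, rfl⟩
      simpa using hAN a ha n hn
    refine (hQ.2 A _ hAfN).imp (Submodule.map_le_iff_le_comap.1) fun hAQ a ha x => ?_
    simpa using hAQ a ha (f x)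

lemma IsPrimeSubmodule.map_of_surjective {P : Submodule R M} (hP : IsPrimeSubmodule P)
    {f : M →ₗ[R] M'} (hf : Function.Surjective f) (hker : LinearMap.ker f ≤ P) :
    IsPrimeSubmodule (P.map f) := by
  have hcomap : (P.map f).comap f = P := Submodule.comap_map_eq_self hker
  refine ⟨fun htop => hP.1 ?_, fun A N hAN => ?_⟩
  · rw [← hcomap, htop, Submodule.comap_top]
  · have hAN' : ∀ a ∈ A, ∀ n ∈ N.comap f, a • n ∈ P := by
      intro a ha n hn
      rw [← hcomap, Submodule.mem_comap, map_smul]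
      exact hAN a ha (f n) hn
    refine (hP.2 A _ hAN').imp (fun hle => ?_) fun hAP a ha y => ?_
    · rw [← Submodule.map_comap_eq_of_surjective hf N]
      exact Submodule.map_mono hle
    · obtain ⟨x, rfl⟩ := hf y
      simpa using Submodule.mem_map_of_mem (f := f) (hAP a ha x)

lemma primeRadical_eq_comap_mkQ (N : Submodule R M) :
    primeRadical N = (primeRadical (⊥ : Submodule R (M ⧸ N))).comap N.mkQ := by
  ext x
  simp only [primeRadical, Submodule.mem_comap, Submodule.mem_sInf, Set.mem_ofPred_eq]
  constructor
  · intro hx Q hQ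
    refine hx _ ⟨hQ.1.comap_of_surjective N.mkQ_surjective, fun n hn => ?_⟩
    simp [(Submodule.Quotient.mk_eq_zero N).2 hn]
  · intro hx P hP
    have hker : LinearMap.ker N.mkQ ≤ P := by rw [N.ker_mkQ]; exact hP.2
    rw [← Submodule.comap_map_eq_self hker]
    exact hx _ ⟨hP.1.map_of_surjective N.mkQ_surjective hker, bot_le⟩

end

/-- if `N` is a 2-primal submodule of `M`, then
`⟨E_M(N)⟩/N ⊆ ⟨E_M(β(N))⟩/N = β(N)/N`. -/
theorem span_envelope_quot_le_of_twoPrimal {R : Type*} [Ring R] {M : Type*}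
    [AddCommGroup M] [Module R M] (N : Submodule R M)
    (h2p : cpRadical (⊥ : Submodule R (M ⧸ N)) = primeRadical (⊥ : Submodule R (M ⧸ N))) :
    (Submodule.span R (envelope N)).map N.mkQ ≤
        (Submodule.span R (envelope (primeRadical N))).map N.mkQ ∧
      (Submodule.span R (envelope (primeRadical N))).map N.mkQ =
        (primeRadical N).map N.mkQ := by
  have hsemiprime : IsCompletelySemiprimeSubmodule (primeRadical N) := by
    rw [primeRadical_eq_comap_mkQ, ← h2p]
    exact (cpRadical_isCompletelySemiprime _).comap N.mkQ
  have hspan : Submodule.span R (envelope (primeRadical N)) = primeRadical N :=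
    le_antisymm (Submodule.span_le.2 hsemiprime.envelope_subset)
      ((subset_envelope _).trans Submodule.subset_span)
  exact ⟨Submodule.map_mono (Submodule.span_mono (envelope_mono (le_primeRadical N))),
    congrArg _ hspan⟩
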